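/- arXiv:2510.00756 — 6 statements merged into one kernel-verified Lean document; each statement's English description precedes it below -/
import Mathlib

section
/- For every integer n ≥ 0, the map ψ_n sending f∂ to f∂ + Σ_{i=0}^{n-1} (f^{(i+1)}/(i+1)!) v_i is a Lie algebra homomorphism from the one-sided Witt algebra W_{≥-1} to the associative algebra T_n = A_1 ⊗ U(g_n), where T_n carries the commutator bracket. -/
noncomputable section

/-- Generators of `T_n = A_1 ⊗ U(g_n)`: `t`, `∂`, and `v_0, …, v_{n-1}`. -/
inductive TGen (n : ℕ) : Type
  | t : TGen n
  | d : TGen n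
  | v : Fin n → TGen n

/-- Defining relations of `T_n = A_1 ⊗ U(g_n)`: `∂t = t∂ + 1`, the `v_i` commute with
`t` and `∂`, and `[v_i, v_j] = (j-i) v_{i+j}` (with `v_m = 0` for `m ≥ n`). -/
inductive tnRel (k : Type) [Field k] (n : ℕ) :
    FreeAlgebra k (TGen n) → FreeAlgebra k (TGen n) → Prop
  | dt : tnRel k n (FreeAlgebra.ι k (TGen.d : TGen n) * FreeAlgebra.ι k (TGen.t : TGen n))
      (FreeAlgebra.ι k (TGen.t : TGen n) * FreeAlgebra.ι k (TGen.d : TGen n) + 1)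
  | tv (i : Fin n) :
      tnRel k n (FreeAlgebra.ι k (TGen.t : TGen n) * FreeAlgebra.ι k (TGen.v i))
        (FreeAlgebra.ι k (TGen.v i) * FreeAlgebra.ι k (TGen.t : TGen n))
  | dv (i : Fin n) :
      tnRel k n (FreeAlgebra.ι k (TGen.d : TGen n) * FreeAlgebra.ι k (TGen.v i))
        (FreeAlgebra.ι k (TGen.v i) * FreeAlgebra.ι k (TGen.d : TGen n))
  | vv (i j : Fin n) :
      tnRel k n (FreeAlgebra.ι k (TGen.v i) * FreeAlgebra.ι k (TGen.v j))
        (FreeAlgebra.ι k (TGen.v j) * FreeAlgebra.ι k (TGen.v i) +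
          ((j : ℤ) - (i : ℤ)) •
            (if h : i.1 + j.1 < n then FreeAlgebra.ι k (TGen.v (⟨i.1 + j.1, h⟩ : Fin n))
             else 0))

/-- The algebra `T_n = A_1 ⊗ U(g_n)`, presented by generators and relations. -/
abbrev Tn (k : Type) [Field k] (n : ℕ) := RingQuot (tnRel k n)

/-- The element `t ∈ T_n`. -/
def tT (k : Type) [Field k] (n : ℕ) : Tn k n :=
  RingQuot.mkAlgHom k (tnRel k n) (FreeAlgebra.ι k (TGen.t : TGen n))

/-- The element `∂ ∈ T_n`. -/
def dT (k : Type) [Field k] (n : ℕ) : Tn k n :=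
  RingQuot.mkAlgHom k (tnRel k n) (FreeAlgebra.ι k (TGen.d : TGen n))

/-- The element `v_j ∈ T_n`. -/
def vT (k : Type) [Field k] (n : ℕ) (j : Fin n) : Tn k n :=
  RingQuot.mkAlgHom k (tnRel k n) (FreeAlgebra.ι k (TGen.v j))

/-- The image `c_i = Ψ_n(e_i) = t^{i+1}∂ + Σ_{j=0}^{n-1} binom(i+1,j+1) t^{i-j} v_j ∈ T_n`
of the Witt generator `e_i` under the `n`-th orbit homomorphism. -/
def cT (k : Type) [Field k] (n : ℕ) (i : ℤ) : Tn k n :=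
  tT k n ^ (i + 1).toNat * dT k n +
    ∑ j : Fin n, (((i + 1).toNat.choose (j.1 + 1) : ℤ)) •
      (tT k n ^ (i - j.1).toNat * vT k n j)

/-- The map `ψ_n : W_{≥-1} → T_n`, `f∂ ↦ f(t)∂ + Σ_{i=0}^{n-1} (f^{(i+1)}/(i+1)!) v_i`,
where `W_{≥-1}` is modelled as `k[t]` with `f` standing for `f∂`. -/
def ψmap (k : Type) [Field k] (n : ℕ) (f : Polynomial k) : Tn k n :=
  Polynomial.aeval (tT k n) f * dT k n +
    ∑ j : Fin n, (((j.1 + 1).factorial : k)⁻¹) •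
      (Polynomial.aeval (tT k n) (Polynomial.derivative^[j.1 + 1] f) * vT k n j)

section Lemmas

open Polynomial

variable {k : Type} [Field k] {n : ℕ}

/-- `v_m` for `m : ℕ`, interpreted as `0` when `m ≥ n`. -/
def wT (k : Type) [Field k] (n : ℕ) (m : ℕ) : Tn k n :=
  if h : m < n then vT k n ⟨m, h⟩ else 0

lemma rel_dt : dT k n * tT k n = tT k n * dT k n + 1 := by
  have := RingQuot.mkAlgHom_rel k (tnRel.dt (k := k) (n := n))
  simpa [tT, dT, map_mul, map_add, map_one] using this

lemma rel_tv (i : Fin n) : tT k n * vT k n i = vT k n i * tT k n := by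
  have := RingQuot.mkAlgHom_rel k (tnRel.tv (k := k) (n := n) i)
  simpa [tT, vT, map_mul] using this

lemma rel_dv (i : Fin n) : dT k n * vT k n i = vT k n i * dT k n := by
  have := RingQuot.mkAlgHom_rel k (tnRel.dv (k := k) (n := n) i)
  simpa [dT, vT, map_mul] using this

lemma rel_vv (i j : Fin n) :
    vT k n i * vT k n j = vT k n j * vT k n i +
      ((j : ℤ) - (i : ℤ)) • wT k n (i.1 + j.1) := by
  have := RingQuot.mkAlgHom_rel k (tnRel.vv (k := k) (n := n) i j)
  simp only [map_mul, map_add, map_zsmul] at this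
  rw [vT, vT, this, wT]
  congr 1
  by_cases h : i.1 + j.1 < n <;> simp [h, vT]

end Lemmas
section Lemmas2

open Polynomial

variable {k : Type} [Field k] {n : ℕ}

lemma comm_algMap (x : Tn k n) (c : k) : Commute x (algebraMap k (Tn k n) c) :=
  (Algebra.commutes c x).symm

lemma comm_aeval {x : Tn k n} (h : Commute x (tT k n)) (p : Polynomial k) :
    Commute x (aeval (tT k n) p) := by
  induction p using Polynomial.induction_on' with
  | add p q hp hq => simpa [map_add] using hp.add_right hq
  | monomial m c =>
      simp only [aeval_monomial]
      exact (comm_algMap x c).mul_right (h.pow_right m)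

lemma comm_aeval_aeval (p q : Polynomial k) :
    Commute (aeval (tT k n) p) (aeval (tT k n) q) :=
  comm_aeval ((comm_aeval (Commute.refl _) p).symm) q

lemma comm_v_t (i : Fin n) : Commute (vT k n i) (tT k n) := (rel_tv i).symm

lemma comm_v_aeval (i : Fin n) (p : Polynomial k) :
    Commute (vT k n i) (aeval (tT k n) p) :=
  comm_aeval (comm_v_t i) p

lemma d_pow_succ (m : ℕ) :
    dT k n * tT k n ^ (m + 1) = tT k n ^ (m + 1) * dT k n + ((m : k) + 1) • tT k n ^ m := by
  induction m with
  | zero => simpa using rel_dt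
  | succ m ih =>
      rw [pow_succ', ← mul_assoc, rel_dt, add_mul, one_mul, mul_assoc, ih, mul_add,
        ← mul_assoc, ← pow_succ', mul_smul_comm, ← pow_succ']
      push_cast
      module

lemma d_aeval (p : Polynomial k) :
    dT k n * aeval (tT k n) p
      = aeval (tT k n) p * dT k n + aeval (tT k n) (derivative p) := by
  induction p using Polynomial.induction_on' with
  | add p q hp hq =>
      simp only [map_add, mul_add, add_mul, hp, hq]; abel
  | monomial m c =>
      cases m with
      | zero =>
          simp only [derivative_monomial, Nat.cast_zero, mul_zero, map_zero,
            aeval_monomial, pow_zero, mul_one, add_zero]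
          exact (comm_algMap (dT k n) c).eq
      | succ m =>
          simp only [aeval_monomial, derivative_monomial]
          rw [← mul_assoc, (comm_algMap (dT k n) c).eq, mul_assoc, d_pow_succ, mul_add]
          congr 1
          · rw [mul_assoc]
          · rw [Nat.add_sub_cancel, Algebra.smul_def, ← mul_assoc, ← map_mul]
            congr 2
            push_cast
            ring

end Lemmas2
section Lemmas3

open Finset

lemma tri_sum {M : Type*} [AddCommMonoid M] (n : ℕ) (h : ℕ → ℕ → M)
    (hz : ∀ i j, n ≤ i + j → h i j = 0) :
    ∑ i ∈ range n, ∑ j ∈ range n, h i j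
      = ∑ m ∈ range n, ∑ i ∈ range (m + 1), h i (m - i) := by
  calc ∑ i ∈ range n, ∑ j ∈ range n, h i j
      = ∑ i ∈ range n, ∑ j ∈ range (n - i), h i j := by
        refine Finset.sum_congr rfl fun i _ => ?_
        refine (Finset.sum_subset (Finset.range_subset_range.mpr (Nat.sub_le n i)) ?_).symm
        intro j hj hj'
        refine hz i j ?_
        simp only [Finset.mem_range] at hj hj'
        omega
    _ = ∑ m ∈ range n, ∑ i ∈ range (m + 1), h i (m - i) := by
        rw [Finset.sum_sigma', Finset.sum_sigma']
        refine Finset.sum_nbij' (fun p => ⟨p.1 + p.2, p.1⟩) (fun p => ⟨p.2, p.1 - p.2⟩)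
          ?_ ?_ ?_ ?_ ?_
        · rintro ⟨a, b⟩ hab
          simp only [Finset.mem_sigma, Finset.mem_range] at *
          omega
        · rintro ⟨a, b⟩ hab
          simp only [Finset.mem_sigma, Finset.mem_range] at *
          omega
        · rintro ⟨a, b⟩ hab
          have : a + b - a = b := by omega
          simp [this]
        · rintro ⟨a, b⟩ hab
          simp only [Finset.mem_sigma, Finset.mem_range] at hab
          have : b + (a - b) = a := by omega
          simp [this]
        · rintro ⟨a, b⟩ hab
          have : a + b - a = b := by omega
          simp [this]

end Lemmas3
section Lemmas4

variable {k : Type} [Field k] [CharZero k]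

lemma scalar_id (m i : ℕ) (h : i ≤ m) :
    (((i + 1).factorial : k))⁻¹ * (((m - i + 1).factorial : k))⁻¹
        * (((((m - i : ℕ) : ℤ) - (i : ℤ)) : ℤ) : k)
      = (((m + 1).factorial : k))⁻¹
          * (((m + 1).choose (i + 1) : k) - ((m + 1).choose i : k)) := by
  have h1 := Nat.choose_mul_factorial_mul_factorial (Nat.succ_le_succ h)
  have h2 := Nat.choose_mul_factorial_mul_factorial (h.trans (Nat.le_succ m))
  rw [Nat.succ_sub_succ] at h1
  have e1 : m + 1 - i = m - i + 1 := by omega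
  rw [e1] at h2
  have e2 : (m - i + 1).factorial = (m - i + 1) * (m - i).factorial := rfl
  have e3 : (i + 1).factorial = (i + 1) * i.factorial := rfl
  have c1 : (((m + 1).choose (i + 1) : k)) * ((i + 1).factorial : k) * ((m - i).factorial : k)
      = ((m + 1).factorial : k) := by exact_mod_cast congrArg (Nat.cast : ℕ → k) h1
  have c2 : (((m + 1).choose i : k)) * ((i).factorial : k) * ((m - i + 1).factorial : k)
      = ((m + 1).factorial : k) := by exact_mod_cast congrArg (Nat.cast : ℕ → k) h2
  have f0 : ((i.factorial : k)) ≠ 0 := Nat.cast_ne_zero.mpr (Nat.factorial_ne_zero i)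
  have f1 : (((i + 1).factorial : k)) ≠ 0 := Nat.cast_ne_zero.mpr (Nat.factorial_ne_zero _)
  have f2 : (((m - i).factorial : k)) ≠ 0 := Nat.cast_ne_zero.mpr (Nat.factorial_ne_zero _)
  have f3 : (((m - i + 1).factorial : k)) ≠ 0 := Nat.cast_ne_zero.mpr (Nat.factorial_ne_zero _)
  have f4 : (((m + 1).factorial : k)) ≠ 0 := Nat.cast_ne_zero.mpr (Nat.factorial_ne_zero _)
  have hc : ((m - i : ℕ) : k) = (m : k) - (i : k) := by
    push_cast [h]; ring
  push_cast [hc]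
  field_simp
  push_cast [e2, e3, hc] at c1 c2 ⊢
  linear_combination (-((m : k) - i + 1)) * c1 + ((i : k) + 1) * c2

end Lemmas4
section Lemmas5

open Polynomial Finset

variable {k : Type} [Field k]

lemma leibniz_id (m : ℕ) (f g : Polynomial k) :
    derivative^[m + 1] (f * derivative g - derivative f * g)
      = f * derivative^[m + 2] g - derivative^[m + 2] f * g
        + ∑ i ∈ range (m + 1),
            ((((m + 1).choose (i + 1) : k)) - (((m + 1).choose i : k))) •
              (derivative^[i + 1] f * derivative^[m - i + 1] g) := by
  rw [iterate_derivative_sub, iterate_derivative_mul, iterate_derivative_mul]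
  have hA : ∀ r : ℕ, derivative^[r] (derivative g) = derivative^[r + 1] g := fun r =>
    (Function.iterate_succ_apply derivative r g).symm
  have hB : ∀ r ∈ range (m + 2),
      (m + 1).choose r • (derivative^[m + 1 - r] (derivative f) * derivative^[r] g)
        = (m + 1).choose r • (derivative^[m + 2 - r] f * derivative^[r] g) := by
    intro r hr
    simp only [mem_range] at hr
    congr 2
    rw [← Function.iterate_succ_apply derivative]
    congr 1
    omega
  rw [Finset.sum_congr rfl hB]
  simp only [hA]
  rw [Finset.sum_range_succ (n := m + 1), Finset.sum_range_succ' _ (m + 1)]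
  have e1 : m + 1 - (m + 1) = 0 := by omega
  simp only [e1, Nat.choose_self, Nat.choose_zero_right, one_smul,
    Function.iterate_zero_apply, Nat.sub_zero, Nat.sub_self]
  rw [show (∑ i ∈ range (m + 1),
        ((((m + 1).choose (i + 1) : k)) - (((m + 1).choose i : k))) •
          (derivative^[i + 1] f * derivative^[m - i + 1] g))
      = ∑ r ∈ range (m + 1),
          ((((m + 1).choose r : k)) - (((m + 1).choose (r + 1) : k))) •
            (derivative^[m + 1 - r] f * derivative^[r + 1] g) from ?_]
  · have hterm : ∀ r ∈ range (m + 1),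
        ((m + 1).choose r • (derivative^[m + 1 - r] f * derivative^[r + 1] g)
          - (m + 1).choose (r + 1) • (derivative^[m + 2 - (r + 1)] f * derivative^[r + 1] g))
        = ((((m + 1).choose r : k)) - (((m + 1).choose (r + 1) : k))) •
            (derivative^[m + 1 - r] f * derivative^[r + 1] g) := by
      intro r hr
      simp only [mem_range] at hr
      have e2 : m + 2 - (r + 1) = m + 1 - r := by omega
      rw [e2, sub_smul, Nat.cast_smul_eq_nsmul, Nat.cast_smul_eq_nsmul]
    have key := (Finset.sum_sub_distrib (s := range (m + 1))
      (f := fun r => (m + 1).choose r • (derivative^[m + 1 - r] f * derivative^[r + 1] g))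
      (g := fun r => (m + 1).choose (r + 1) •
        (derivative^[m + 2 - (r + 1)] f * derivative^[r + 1] g))).symm.trans
      (Finset.sum_congr rfl hterm)
    have e6 : m + 1 + 1 = m + 2 := rfl
    rw [e6]
    linear_combination key
  · rw [← Finset.sum_range_reflect]
    refine Finset.sum_congr rfl fun r hr => ?_
    simp only [mem_range] at hr
    have e3 : m + 1 - 1 - r = m - r := by omega
    have e4 : m - (m - r) = r := by omega
    have e5 : m - r + 1 = m + 1 - r := by omega
    have c1 : (m + 1).choose (m - r + 1) = (m + 1).choose r := by
      rw [show m - r + 1 = m + 1 - r from e5, Nat.choose_symm (by omega)]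
    have c2 : (m + 1).choose (m - r) = (m + 1).choose (r + 1) := by
      rw [show m - r = m + 1 - (r + 1) by omega, Nat.choose_symm (by omega)]
    rw [e3, c1, c2, e4, e5]

end Lemmas5
section Lemmas6

open Polynomial Finset

variable {k : Type} [Field k] {n : ℕ}

local notation "A" => (aeval (R := k) (tT k n))
local notation "D" => dT k n
local notation "V" => vT k n

lemma br1 (p q : Polynomial k) :
    (A p * D) * (A q * D) - (A q * D) * (A p * D)
      = A (p * derivative q - derivative p * q) * D := by
  have e : ∀ x y : Tn k n, (x * D) * (y * D) = x * (D * y) * D := fun x y => by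
    rw [mul_assoc, ← mul_assoc D y D, ← mul_assoc]
  rw [e, e, d_aeval, d_aeval, mul_add, add_mul, mul_add, add_mul]
  have c : A q * (A p * D) = A p * (A q * D) := by
    rw [← mul_assoc, ← mul_assoc, (comm_aeval_aeval q p).eq]
  have c2 : A q * A (derivative p) = A (derivative p) * A q := (comm_aeval_aeval q _).eq
  rw [c, c2, map_sub, map_mul, map_mul, sub_mul]
  abel

lemma br2 (p q : Polynomial k) (i : Fin n) :
    (A p * D) * (A q * V i) - (A q * V i) * (A p * D)
      = A (p * derivative q) * V i := by
  have e1 : (A p * D) * (A q * V i) = A p * (D * A q) * V i := by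
    rw [mul_assoc, ← mul_assoc D (A q) (V i), ← mul_assoc]
  have e2 : (A q * V i) * (A p * D) = A q * (A p * V i) * D := by
    rw [mul_assoc, mul_assoc, ← (comm_v_aeval i p).eq, ← mul_assoc (V i) (A p) D,
      ← mul_assoc, mul_assoc (A q) _ D]
  rw [e1, e2, d_aeval, mul_add, add_mul]
  have c1 : A p * (A q * D) * V i = A q * (A p * V i) * D := by
    rw [← mul_assoc, (comm_aeval_aeval p q).eq, mul_assoc (A q) (A p) D,
      mul_assoc, mul_assoc, mul_assoc, rel_dv i, ← mul_assoc (A p) (V i) D]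
  rw [c1, map_mul]
  abel

lemma br3 (p q : Polynomial k) (i j : Fin n) :
    (A p * V i) * (A q * V j) - (A q * V j) * (A p * V i)
      = ((j : ℤ) - (i : ℤ)) • (A (p * q) * wT k n (i.1 + j.1)) := by
  have e : ∀ (x y : Polynomial k) (a b : Fin n),
      (A x * V a) * (A y * V b) = A x * A y * (V a * V b) := fun x y a b => by
    rw [mul_assoc, ← mul_assoc (V a) (A y) (V b), (comm_v_aeval a y).eq,
      mul_assoc (A y) (V a) (V b), ← mul_assoc]
  rw [e, e, (comm_aeval_aeval q p).eq, rel_vv i j, mul_add, add_sub_cancel_left,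
    mul_smul_comm, map_mul]

end Lemmas6
section Lemmas7

open Polynomial Finset

variable {k : Type} [Field k] {n : ℕ}

lemma wT_eq (j : Fin n) : wT k n j.1 = vT k n j := by
  rw [wT, dif_pos j.2]

lemma hG2 (f g : Polynomial k) :
    (aeval (tT k n) f * dT k n) *
        (∑ j : Fin n, (((j.1 + 1).factorial : k)⁻¹) •
          (aeval (tT k n) (derivative^[j.1 + 1] g) * vT k n j))
      - (∑ j : Fin n, (((j.1 + 1).factorial : k)⁻¹) •
          (aeval (tT k n) (derivative^[j.1 + 1] g) * vT k n j)) *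
        (aeval (tT k n) f * dT k n)
      = ∑ m ∈ range n, (((m + 1).factorial : k)⁻¹) •
          (aeval (tT k n) (f * derivative^[m + 2] g) * wT k n m) := by
  rw [Finset.mul_sum, Finset.sum_mul, ← Finset.sum_sub_distrib]
  have step : ∀ j : Fin n,
      (aeval (tT k n) f * dT k n) * ((((j.1 + 1).factorial : k)⁻¹) •
          (aeval (tT k n) (derivative^[j.1 + 1] g) * vT k n j))
        - ((((j.1 + 1).factorial : k)⁻¹) •
          (aeval (tT k n) (derivative^[j.1 + 1] g) * vT k n j)) *
            (aeval (tT k n) f * dT k n)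
      = (((j.1 + 1).factorial : k)⁻¹) •
          (aeval (tT k n) (f * derivative^[j.1 + 2] g) * wT k n j.1) := by
    intro j
    rw [mul_smul_comm, smul_mul_assoc]
    rw [← smul_sub ((((j.1 + 1).factorial : k))⁻¹)
      ((aeval (tT k n) f * dT k n) * (aeval (tT k n) (derivative^[j.1 + 1] g) * vT k n j))
      ((aeval (tT k n) (derivative^[j.1 + 1] g) * vT k n j) * (aeval (tT k n) f * dT k n))]
    rw [br2, wT_eq,
      ← Function.iterate_succ_apply' derivative (j.1 + 1) g]
  rw [Finset.sum_congr rfl fun j _ => step j]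
  exact Fin.sum_univ_eq_sum_range
    (fun m => (((m + 1).factorial : k)⁻¹) •
      (aeval (tT k n) (f * derivative^[m + 2] g) * wT k n m)) n


variable (f g : Polynomial k)

lemma wT_zero {m : ℕ} (h : n ≤ m) : wT k n m = 0 := by
  rw [wT, dif_neg (by omega)]

lemma hG3 :
    (∑ i : Fin n, (((i.1 + 1).factorial : k)⁻¹) •
          (aeval (tT k n) (derivative^[i.1 + 1] f) * vT k n i)) *
        (aeval (tT k n) g * dT k n)
      - (aeval (tT k n) g * dT k n) *
        (∑ i : Fin n, (((i.1 + 1).factorial : k)⁻¹) •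
          (aeval (tT k n) (derivative^[i.1 + 1] f) * vT k n i))
      = -∑ m ∈ range n, (((m + 1).factorial : k)⁻¹) •
          (aeval (tT k n) (derivative^[m + 2] f * g) * wT k n m) := by
  rw [Finset.mul_sum, Finset.sum_mul, ← Finset.sum_sub_distrib]
  have step : ∀ i : Fin n,
      ((((i.1 + 1).factorial : k)⁻¹) •
          (aeval (tT k n) (derivative^[i.1 + 1] f) * vT k n i)) *
            (aeval (tT k n) g * dT k n)
        - (aeval (tT k n) g * dT k n) * ((((i.1 + 1).factorial : k)⁻¹) •
          (aeval (tT k n) (derivative^[i.1 + 1] f) * vT k n i))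
      = -((((i.1 + 1).factorial : k)⁻¹) •
          (aeval (tT k n) (derivative^[i.1 + 2] f * g) * wT k n i.1)) := by
    intro i
    rw [mul_smul_comm, smul_mul_assoc,
      ← smul_sub ((((i.1 + 1).factorial : k))⁻¹)
        ((aeval (tT k n) (derivative^[i.1 + 1] f) * vT k n i) * (aeval (tT k n) g * dT k n))
        ((aeval (tT k n) g * dT k n) * (aeval (tT k n) (derivative^[i.1 + 1] f) * vT k n i)),
      show (aeval (tT k n) (derivative^[i.1 + 1] f) * vT k n i) * (aeval (tT k n) g * dT k n)
            - (aeval (tT k n) g * dT k n) * (aeval (tT k n) (derivative^[i.1 + 1] f) * vT k n i)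
          = -((aeval (tT k n) g * dT k n) * (aeval (tT k n) (derivative^[i.1 + 1] f) * vT k n i)
            - (aeval (tT k n) (derivative^[i.1 + 1] f) * vT k n i) * (aeval (tT k n) g * dT k n))
        from (neg_sub _ _).symm,
      br2, wT_eq, ← Function.iterate_succ_apply' derivative (i.1 + 1) f, smul_neg,
      mul_comm g (derivative^[i.1 + 1 + 1] f)]
  rw [Finset.sum_congr rfl fun i _ => step i, Finset.sum_neg_distrib]
  congr 1
  exact Fin.sum_univ_eq_sum_range
    (fun m => (((m + 1).factorial : k)⁻¹) •
      (aeval (tT k n) (derivative^[m + 2] f * g) * wT k n m)) n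


end Lemmas7


section Lemmas8

open Polynomial Finset

variable {k : Type} [Field k] [CharZero k] {n : ℕ} (f g : Polynomial k)

lemma hG4 :
    (∑ i : Fin n, (((i.1 + 1).factorial : k)⁻¹) •
          (aeval (tT k n) (derivative^[i.1 + 1] f) * vT k n i)) *
        (∑ j : Fin n, (((j.1 + 1).factorial : k)⁻¹) •
          (aeval (tT k n) (derivative^[j.1 + 1] g) * vT k n j))
      - (∑ j : Fin n, (((j.1 + 1).factorial : k)⁻¹) •
          (aeval (tT k n) (derivative^[j.1 + 1] g) * vT k n j)) *
        (∑ i : Fin n, (((i.1 + 1).factorial : k)⁻¹) •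
          (aeval (tT k n) (derivative^[i.1 + 1] f) * vT k n i))
      = ∑ m ∈ range n, (((m + 1).factorial : k)⁻¹) •
          (aeval (tT k n) (∑ i ∈ range (m + 1),
              ((((m + 1).choose (i + 1) : k)) - (((m + 1).choose i : k))) •
                (derivative^[i + 1] f * derivative^[m - i + 1] g)) * wT k n m) := by
  classical
  -- the summand of the double sum, as a function of natural indices
  set h : ℕ → ℕ → Tn k n := fun i j =>
    ((((i + 1).factorial : k)⁻¹) * (((j + 1).factorial : k)⁻¹) * ((j : k) - (i : k))) •
      (aeval (tT k n) (derivative^[i + 1] f * derivative^[j + 1] g) * wT k n (i + j))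
    with hh
  have step : ∀ i j : Fin n,
      ((((i.1 + 1).factorial : k)⁻¹) •
            (aeval (tT k n) (derivative^[i.1 + 1] f) * vT k n i)) *
          ((((j.1 + 1).factorial : k)⁻¹) •
            (aeval (tT k n) (derivative^[j.1 + 1] g) * vT k n j))
        - ((((j.1 + 1).factorial : k)⁻¹) •
            (aeval (tT k n) (derivative^[j.1 + 1] g) * vT k n j)) *
          ((((i.1 + 1).factorial : k)⁻¹) •
            (aeval (tT k n) (derivative^[i.1 + 1] f) * vT k n i))
      = h i.1 j.1 := by
    intro i j
    rw [hh]
    rw [smul_mul_assoc, mul_smul_comm, smul_smul, smul_mul_assoc, mul_smul_comm, smul_smul,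
      mul_comm (((j.1 + 1).factorial : k)⁻¹) (((i.1 + 1).factorial : k)⁻¹),
      ← smul_sub ((((i.1 + 1).factorial : k)⁻¹) * (((j.1 + 1).factorial : k)⁻¹))
        ((aeval (tT k n) (derivative^[i.1 + 1] f) * vT k n i) *
          (aeval (tT k n) (derivative^[j.1 + 1] g) * vT k n j))
        ((aeval (tT k n) (derivative^[j.1 + 1] g) * vT k n j) *
          (aeval (tT k n) (derivative^[i.1 + 1] f) * vT k n i)),
      br3, ← Int.cast_smul_eq_zsmul k, smul_smul]
    push_cast
    ring_nf
  calc _ = ∑ i : Fin n, ∑ j : Fin n, h i.1 j.1 := by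
        simp only [Finset.sum_mul, Finset.mul_sum]
        rw [Finset.sum_comm (s := (univ : Finset (Fin n))) (t := (univ : Finset (Fin n)))]
        rw [← Finset.sum_sub_distrib]
        refine Finset.sum_congr rfl fun i _ => ?_
        rw [← Finset.sum_sub_distrib]
        exact Finset.sum_congr rfl fun j _ => step i j
    _ = ∑ i ∈ range n, ∑ j ∈ range n, h i j := by
        rw [Fin.sum_univ_eq_sum_range (fun i => ∑ j : Fin n, h i j.1) n]
        exact Finset.sum_congr rfl fun i _ =>
          Fin.sum_univ_eq_sum_range (fun j => h i j) n
    _ = ∑ m ∈ range n, ∑ i ∈ range (m + 1), h i (m - i) := by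
        refine tri_sum n h fun i j hij => ?_
        rw [hh]
        simp only [wT_zero hij, mul_zero, smul_zero]
    _ = _ := by
        refine Finset.sum_congr rfl fun m hm => ?_
        rw [Finset.mem_range] at hm
        have inner : ∀ i ∈ range (m + 1), h i (m - i)
            = (((m + 1).factorial : k)⁻¹) •
                ((((((m + 1).choose (i + 1) : k)) - (((m + 1).choose i : k))) •
                  aeval (tT k n) (derivative^[i + 1] f * derivative^[m - i + 1] g))
                * wT k n m) := by
          intro i hi
          rw [Finset.mem_range] at hi
          have him : i ≤ m := by omega
          have e : i + (m - i) = m := by omega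
          rw [hh]
          simp only [e]
          rw [show (((m - i : ℕ) : k) - (i : k))
              = ((((((m - i : ℕ) : ℤ)) - (i : ℤ)) : ℤ) : k) by push_cast; ring]
          rw [scalar_id m i him, mul_smul,
            ← smul_mul_assoc ((((m + 1).choose (i + 1) : k)) - (((m + 1).choose i : k)))
              (aeval (tT k n) (derivative^[i + 1] f * derivative^[m - i + 1] g))
              (wT k n m)]
        rw [Finset.sum_congr rfl inner]
        rw [← Finset.smul_sum, ← Finset.sum_mul]
        congr 2
        rw [map_sum]
        exact Finset.sum_congr rfl fun i _ => (map_smul _ _ _).symm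

end Lemmas8
section Lemmas9

open Polynomial Finset

variable {k : Type} [Field k] [CharZero k] {n : ℕ} (f g : Polynomial k)

omit [CharZero k] in
lemma hLHS :
    ψmap k n (f * derivative g - derivative f * g)
      = aeval (tT k n) (f * derivative g - derivative f * g) * dT k n
        + ((∑ m ∈ range n, (((m + 1).factorial : k)⁻¹) •
              (aeval (tT k n) (f * derivative^[m + 2] g) * wT k n m))
          + ((-∑ m ∈ range n, (((m + 1).factorial : k)⁻¹) •
              (aeval (tT k n) (derivative^[m + 2] f * g) * wT k n m))
            + ∑ m ∈ range n, (((m + 1).factorial : k)⁻¹) •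
                (aeval (tT k n) (∑ i ∈ range (m + 1),
                    ((((m + 1).choose (i + 1) : k)) - (((m + 1).choose i : k))) •
                      (derivative^[i + 1] f * derivative^[m - i + 1] g)) * wT k n m))) := by
  rw [ψmap]
  congr 1
  calc ∑ j : Fin n, (((j.1 + 1).factorial : k)⁻¹) •
          (aeval (tT k n) (derivative^[j.1 + 1] (f * derivative g - derivative f * g))
            * vT k n j)
      = ∑ m ∈ range n, (((m + 1).factorial : k)⁻¹) •
          (aeval (tT k n) (derivative^[m + 1] (f * derivative g - derivative f * g))
            * wT k n m) := by
        simp only [← wT_eq]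
        exact Fin.sum_univ_eq_sum_range (fun m => (((m + 1).factorial : k)⁻¹) •
          (aeval (tT k n) (derivative^[m + 1] (f * derivative g - derivative f * g))
            * wT k n m)) n
    _ = ∑ m ∈ range n,
          ((((m + 1).factorial : k)⁻¹) • (aeval (tT k n) (f * derivative^[m + 2] g) * wT k n m)
            - (((m + 1).factorial : k)⁻¹) •
                (aeval (tT k n) (derivative^[m + 2] f * g) * wT k n m)
            + (((m + 1).factorial : k)⁻¹) •
                (aeval (tT k n) (∑ i ∈ range (m + 1),
                    ((((m + 1).choose (i + 1) : k)) - (((m + 1).choose i : k))) •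
                      (derivative^[i + 1] f * derivative^[m - i + 1] g)) * wT k n m)) := by
        refine Finset.sum_congr rfl fun m _ => ?_
        rw [leibniz_id m f g, map_add, map_sub, map_mul, map_mul, add_mul, sub_mul, smul_add,
          smul_sub, ← map_mul, ← map_mul]
    _ = _ := by
        rw [Finset.sum_add_distrib, Finset.sum_sub_distrib]
        abel

theorem psi_bracket :
    ψmap k n (f * Polynomial.derivative g - Polynomial.derivative f * g)
      = ψmap k n f * ψmap k n g - ψmap k n g * ψmap k n f := by
  have expand : ∀ x1 s1 x2 s2 : Tn k n,
      (x1 + s1) * (x2 + s2) - (x2 + s2) * (x1 + s1)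
        = (x1 * x2 - x2 * x1) + ((x1 * s2 - s2 * x1)
            + ((s1 * x2 - x2 * s1) + (s1 * s2 - s2 * s1))) := by
    intros; noncomm_ring
  rw [hLHS f g]
  conv_rhs => rw [ψmap, ψmap]
  rw [expand, br1, hG2 f g, hG3 f g, hG4 f g]

end Lemmas9
section Main

open Polynomial Finset

/-- For every `n ≥ 0`, `ψ_n` is a Lie algebra homomorphism from the one-sided Witt
algebra (with bracket `[f∂,g∂] = (fg'-f'g)∂`) to `T_n` with the commutator bracket:
it is `k`-linear and sends the Witt bracket to the commutator. -/
theorem psi_is_lie_hom (k : Type) [Field k] [CharZero k] (n : ℕ) :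
    (∀ f g : Polynomial k, ψmap k n (f + g) = ψmap k n f + ψmap k n g) ∧
    (∀ (a : k) (f : Polynomial k), ψmap k n (a • f) = a • ψmap k n f) ∧
    (∀ f g : Polynomial k,
      ψmap k n (f * Polynomial.derivative g - Polynomial.derivative f * g)
        = ψmap k n f * ψmap k n g - ψmap k n g * ψmap k n f) := by
  refine ⟨?_, ?_, ?_⟩
  · intro f g
    simp only [ψmap, map_add, iterate_map_add, add_mul, smul_add, Finset.sum_add_distrib]
    abel
  · intro a f
    simp only [ψmap, map_smul, Polynomial.iterate_derivative_smul, smul_mul_assoc, smul_add,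
      Finset.smul_sum, smul_comm a]
  · intro f g
    exact psi_bracket f g

end Main
end
end

section
/- For all integers m ≥ 0, s ≥ -1, k ≥ m-1, the commutator in U(W_{≥-1}) satisfies [e_{-1}, Ω^m_{k,s}] = (k+1-m) Ω^m_{k-1,s} + (s+1) Ω^m_{k,s-1}. -/
noncomputable section

/-- Index set `{i : ℤ | i ≥ -1}` of the basis `e_i` of the one-sided Witt algebra. -/
abbrev WIdx : Type := {i : ℤ // -1 ≤ i}

/-- The defining relations `e_i e_j = e_j e_i + (j - i) e_{i+j}` of the universal
enveloping algebra of the one-sided Witt algebra `W_{≥ -1}`. -/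
inductive wittRel (k : Type) [Field k] :
    FreeAlgebra k WIdx → FreeAlgebra k WIdx → Prop
  | rel (i j : WIdx) (h : -1 ≤ i.1 + j.1) :
      wittRel k (FreeAlgebra.ι k i * FreeAlgebra.ι k j)
        (FreeAlgebra.ι k j * FreeAlgebra.ι k i +
          (j.1 - i.1) • FreeAlgebra.ι k (⟨i.1 + j.1, h⟩ : WIdx))

/-- The universal enveloping algebra `U(W_{≥ -1})`, presented by generators `e_i` (`i ≥ -1`)
and the relations `[e_i, e_j] = (j - i) e_{i+j}`. -/
abbrev UW (k : Type) [Field k] := RingQuot (wittRel k)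

/-- The generator `e_i` of `U(W_{≥ -1})` (junk value `0` for `i < -1`). -/
def eW (k : Type) [Field k] (i : ℤ) : UW k :=
  if h : -1 ≤ i then RingQuot.mkAlgHom k (wittRel k) (FreeAlgebra.ι k ⟨i, h⟩) else 0

/-- The differentiators: `Ω^0_{k,s} = e_k e_s`, `Ω^{m+1}_{k,s} = Ω^m_{k,s} - Ω^m_{k-1,s+1}`. -/
def Ω (k : Type) [Field k] : ℕ → ℤ → ℤ → UW k
  | 0, a, s => eW k a * eW k s
  | m + 1, a, s => Ω k m a s - Ω k m (a - 1) (s + 1)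


lemma ring_aux1 {R : Type*} [Ring R] (x y z : R) :
    z * (x * y) - x * y * z = (z * x - x * z) * y + x * (z * y - y * z) := by noncomm_ring

lemma ring_aux2 {R : Type*} [Ring R] (x y z : R) :
    z * (x - y) - (x - y) * z = (z * x - x * z) - (z * y - y * z) := by noncomm_ring

lemma comm_e_aux (k : Type) [Field k] (i : ℤ) (hi : -1 ≤ i) :
    eW k (-1) * eW k i - eW k i * eW k (-1) = (i + 1) • eW k (i - 1) := by
  rcases eq_or_lt_of_le hi with h | h
  · have : i = -1 := h.symm
    subst this
    norm_num
  · have h0 : (0:ℤ) ≤ i := by omega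
    have hrel := RingQuot.mkAlgHom_rel k
      (wittRel.rel (k := k) ⟨-1, le_refl _⟩ ⟨i, hi⟩ (by simpa using (by omega : -1 ≤ -1 + i)))
    simp only [map_add, map_mul, map_zsmul] at hrel
    have hidx : (⟨-1 + i, by omega⟩ : WIdx) = ⟨i - 1, by omega⟩ := by
      ext; ring
    rw [hidx] at hrel
    have hi1 : -1 ≤ i - 1 := by omega
    unfold eW
    rw [dif_pos hi, dif_pos (by norm_num : (-1:ℤ) ≤ -1), dif_pos hi1]
    rw [hrel]
    simp

/-- `[e_{-1}, Ω^m_{k,s}] = (k+1-m) Ω^m_{k-1,s} + (s+1) Ω^m_{k,s-1}` in `U(W_{≥-1})`. -/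
theorem comm_e_neg_one_omega (k : Type) [Field k] [CharZero k]
    (m : ℕ) (s a : ℤ) (hs : -1 ≤ s) (ha : (m : ℤ) - 1 ≤ a) :
    eW k (-1) * Ω k m a s - Ω k m a s * eW k (-1)
      = (a + 1 - m) • Ω k m (a - 1) s + (s + 1) • Ω k m a (s - 1) := by
  induction m generalizing s a with
  | zero =>
    simp only [Ω, Nat.cast_zero, sub_zero]
    have ha' : -1 ≤ a := by omega
    have h1 := comm_e_aux k a ha'
    have h2 := comm_e_aux k s hs
    rw [ring_aux1, h1, h2, smul_mul_assoc, mul_smul_comm]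
  | succ m IH =>
    have h1 := IH s a hs (by push_cast at ha ⊢; omega)
    have h2 := IH (s + 1) (a - 1) (by omega) (by push_cast at ha ⊢; omega)
    have e1 : a - 1 - 1 = a - 2 := by ring
    have e2 : s + 1 - 1 = s := by ring
    rw [e1, e2] at h2
    have e3 : s - 1 + 1 = s := by ring
    simp only [Ω]
    rw [ring_aux2, h1, h2]
    simp only [e1, e3]
    push_cast
    module
end
end

section
/- For all integers m ≥ 0, s ≥ -1, k ≥ m-1, the commutator in U(W_{≥-1}) satisfies [e_1, Ω^m_{k,s}] = (k-1) Ω^m_{k+1,s} + (s-1+m) Ω^m_{k,s+1}. -/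
noncomputable section

lemma eW_comm (k : Type) [Field k] (i j : ℤ) (hi : -1 ≤ i) (hj : -1 ≤ j)
    (hij : -1 ≤ i + j) :
    eW k i * eW k j - eW k j * eW k i = (j - i) • eW k (i + j) := by
  have h := RingQuot.mkAlgHom_rel k (wittRel.rel (k := k) ⟨i, hi⟩ ⟨j, hj⟩ hij)
  simp only [map_mul, map_add, map_zsmul] at h
  simp only [eW, dif_pos hi, dif_pos hj, dif_pos hij]
  rw [h]; abel

lemma e_one_comm (k : Type) [Field k] (i : ℤ) (hi : -1 ≤ i) :
    eW k 1 * eW k i - eW k i * eW k 1 = (i - 1) • eW k (1 + i) := by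
  exact eW_comm k 1 i (by norm_num) hi (by omega)

/-- `[e_1, Ω^m_{k,s}] = (k-1) Ω^m_{k+1,s} + (s-1+m) Ω^m_{k,s+1}` in `U(W_{≥-1})`. -/
theorem comm_e_one_omega (k : Type) [Field k] [CharZero k]
    (m : ℕ) (s a : ℤ) (hs : -1 ≤ s) (ha : (m : ℤ) - 1 ≤ a) :
    eW k 1 * Ω k m a s - Ω k m a s * eW k 1
      = (a - 1) • Ω k m (a + 1) s + (s - 1 + m) • Ω k m a (s + 1) := by
  induction m generalizing s a with
  | zero =>
    have hA := e_one_comm k a (by omega)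
    have hS := e_one_comm k s hs
    simp only [Ω, Nat.cast_zero, add_zero]
    have key : eW k 1 * (eW k a * eW k s) - (eW k a * eW k s) * eW k 1
        = (eW k 1 * eW k a - eW k a * eW k 1) * eW k s
          + eW k a * (eW k 1 * eW k s - eW k s * eW k 1) := by
      simp only [mul_sub, sub_mul, mul_assoc]; abel
    rw [key, hA, hS, smul_mul_assoc, mul_smul_comm]
    rw [show (1 : ℤ) + a = a + 1 by ring, show (1 : ℤ) + s = s + 1 by ring]
  | succ n ih =>
    have h1 := ih s a hs (by push_cast at ha ⊢; omega)
    have h2 := ih (s + 1) (a - 1) (by omega) (by push_cast at ha ⊢; omega)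
    simp only [Ω]
    have key : eW k 1 * (Ω k n a s - Ω k n (a - 1) (s + 1))
        - (Ω k n a s - Ω k n (a - 1) (s + 1)) * eW k 1
        = (eW k 1 * Ω k n a s - Ω k n a s * eW k 1)
          - (eW k 1 * Ω k n (a - 1) (s + 1) - Ω k n (a - 1) (s + 1) * eW k 1) := by
      simp only [mul_sub, sub_mul, mul_assoc]; abel
    rw [key, h1, h2]
    rw [show a - 1 + 1 = a by ring, show a + 1 - 1 = a by ring,
      show s + 1 + 1 = s + 2 by ring]
    push_cast
    module
end
end

section
/- For all integers m ≥ 0, s ≥ -1, k ≥ m-1, the commutator in U(W_{≥-1}) satisfies [e_2, Ω^m_{k,s}] = (k-2) Ω^m_{k+2,s} + m Ω^m_{k+1,s+1} + (s-2+m) Ω^m_{k,s+2}. -/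
noncomputable section

/-!
Bracketing with `e₂` is a derivation, so on `Ω⁰_{a,s} = e_a e_s` it is computed from
`[e₂, e_j] = (j - 2) e_{j+2}` by the Leibniz rule. As `Ω^{m+1}_{a,s} = Ω^m_{a,s} - Ω^m_{a-1,s+1}`,
the formula for `m + 1` is the difference of two instances of the formula for `m`, regrouped
into differences of the same shape.
-/

namespace Ring

variable {R : Type*} [Ring R]

theorem lie_mul_right (x y z : R) : ⁅x, y * z⁆ = ⁅x, y⁆ * z + y * ⁅x, z⁆ := by
  simp only [Ring.lie_def, mul_sub, sub_mul, mul_assoc]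
  abel

theorem lie_sub_right (x y z : R) : ⁅x, y - z⁆ = ⁅x, y⁆ - ⁅x, z⁆ := by
  simp only [Ring.lie_def, mul_sub, sub_mul]
  abel

end Ring

section Witt

variable (k : Type) [Field k]

theorem lie_eW_eW {i j : ℤ} (hi : -1 ≤ i) (hj : -1 ≤ j) (hij : -1 ≤ i + j) :
    ⁅eW k i, eW k j⁆ = (j - i) • eW k (i + j) := by
  simp only [Ring.lie_def, eW, dif_pos hi, dif_pos hj, dif_pos hij]
  rw [← map_mul, RingQuot.mkAlgHom_rel k (wittRel.rel ⟨i, hi⟩ ⟨j, hj⟩ hij), map_add, map_mul,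
    map_zsmul, add_sub_cancel_left]

theorem lie_eW_two_eW {j : ℤ} (hj : -1 ≤ j) : ⁅eW k 2, eW k j⁆ = (j - 2) • eW k (j + 2) := by
  rw [lie_eW_eW k (by norm_num) hj (by omega), add_comm 2 j]

theorem Ω_zero (a s : ℤ) : Ω k 0 a s = eW k a * eW k s := rfl

theorem Ω_succ (m : ℕ) (a s : ℤ) : Ω k (m + 1) a s = Ω k m a s - Ω k m (a - 1) (s + 1) := rfl

theorem lie_eW_two_Ω (m : ℕ) {a s : ℤ} (hs : -1 ≤ s) (ha : (m : ℤ) - 1 ≤ a) :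
    ⁅eW k 2, Ω k m a s⁆
      = (a - 2) • Ω k m (a + 2) s + (m : ℤ) • Ω k m (a + 1) (s + 1)
          + (s - 2 + m) • Ω k m a (s + 2) := by
  induction m generalizing a s with
  | zero =>
    have ha' : -1 ≤ a := by omega
    simp only [Ω_zero, Ring.lie_mul_right, lie_eW_two_eW k ha', lie_eW_two_eW k hs,
      smul_mul_assoc, mul_smul_comm]
    push_cast
    module
  | succ m ih =>
    have hfirst := ih (a := a) hs (by omega)
    have hsecond := ih (a := a - 1) (s := s + 1) (by omega) (by omega)
    rw [sub_add_cancel, show a - 1 + 2 = a + 1 by ring, show s + 1 + 1 = s + 2 by ring,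
      show s + 1 + 2 = s + 3 by ring] at hsecond
    simp only [Ω_succ, Ring.lie_sub_right, hfirst, hsecond, show a + 2 - 1 = a + 1 by ring,
      add_sub_cancel_right, show s + 2 + 1 = s + 3 by ring, show s + 1 + 1 = s + 2 by ring]
    push_cast
    module

end Witt

theorem comm_e_two_omega_general (k : Type) [Field k]
    (m : ℕ) (s a : ℤ) (hs : -1 ≤ s) (ha : (m : ℤ) - 1 ≤ a) :
    eW k 2 * Ω k m a s - Ω k m a s * eW k 2
      = (a - 2) • Ω k m (a + 2) s + (m : ℤ) • Ω k m (a + 1) (s + 1)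
          + (s - 2 + m) • Ω k m a (s + 2) := by
  rw [← Ring.lie_def]
  exact lie_eW_two_Ω k m hs ha

/-- `[e_2, Ω^m_{k,s}] = (k-2) Ω^m_{k+2,s} + m Ω^m_{k+1,s+1} + (s-2+m) Ω^m_{k,s+2}`
in `U(W_{≥-1})`. -/
theorem comm_e_two_omega (k : Type) [Field k] [CharZero k]
    (m : ℕ) (s a : ℤ) (hs : -1 ≤ s) (ha : (m : ℤ) - 1 ≤ a) :
    eW k 2 * Ω k m a s - Ω k m a s * eW k 2
      = (a - 2) • Ω k m (a + 2) s + (m : ℤ) • Ω k m (a + 1) (s + 1)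
          + (s - 2 + m) • Ω k m a (s + 2) :=
  comm_e_two_omega_general k m s a hs ha
end
end

section
/- In T_∞, with c_i = Ψ_∞(e_i) satisfying [c_i, c_j] = (j-i)c_{i+j} and c_{-1} = ∂, define Ψ_S(x) = 4[c_2,[c_0,x]] + 2[c_2,x] - 3[c_1,[c_1,x]]. If x commutes with ∂ and is homogeneous of degree d, then Ψ_S(x) commutes with ∂; in particular Ψ_S(L) ⊆ L where L = {x : [∂,x] = 0}. (Key identities: [∂,[c_2,x]] = 3[c_1,x] and [∂,[c_1,[c_1,x]]] = (4d+2)[c_1,x].) -/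
noncomputable section

/-- Generators of `T_∞ = A_1 ⊗ U(W_{≥0})`: `t`, `∂`, and `e_i` for `i ≥ 0`. -/
inductive TIGen : Type
  | t : TIGen
  | d : TIGen
  | E : ℕ → TIGen

/-- Defining relations of `T_∞ = A_1 ⊗ U(W_{≥0})`: `∂t = t∂ + 1`, the `e_i` commute with
`t` and `∂`, and `[e_i, e_j] = (j-i) e_{i+j}`. -/
inductive tiRel (k : Type) [Field k] :
    FreeAlgebra k TIGen → FreeAlgebra k TIGen → Prop
  | dt : tiRel k (FreeAlgebra.ι k TIGen.d * FreeAlgebra.ι k TIGen.t)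
      (FreeAlgebra.ι k TIGen.t * FreeAlgebra.ι k TIGen.d + 1)
  | te (i : ℕ) : tiRel k (FreeAlgebra.ι k TIGen.t * FreeAlgebra.ι k (TIGen.E i))
      (FreeAlgebra.ι k (TIGen.E i) * FreeAlgebra.ι k TIGen.t)
  | de (i : ℕ) : tiRel k (FreeAlgebra.ι k TIGen.d * FreeAlgebra.ι k (TIGen.E i))
      (FreeAlgebra.ι k (TIGen.E i) * FreeAlgebra.ι k TIGen.d)
  | ee (i j : ℕ) : tiRel k (FreeAlgebra.ι k (TIGen.E i) * FreeAlgebra.ι k (TIGen.E j))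
      (FreeAlgebra.ι k (TIGen.E j) * FreeAlgebra.ι k (TIGen.E i) +
        ((j : ℤ) - (i : ℤ)) • FreeAlgebra.ι k (TIGen.E (i + j)))

/-- The algebra `T_∞ = A_1 ⊗ U(W_{≥0})`, presented by generators and relations. -/
abbrev TInf (k : Type) [Field k] := RingQuot (tiRel k)

/-- The element `t ∈ T_∞`. -/
def tI (k : Type) [Field k] : TInf k :=
  RingQuot.mkAlgHom k (tiRel k) (FreeAlgebra.ι k TIGen.t)

/-- The element `∂ ∈ T_∞`. -/
def dI (k : Type) [Field k] : TInf k :=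
  RingQuot.mkAlgHom k (tiRel k) (FreeAlgebra.ι k TIGen.d)

/-- The element `e_i ∈ T_∞` for `i ≥ 0`. -/
def eI (k : Type) [Field k] (i : ℕ) : TInf k :=
  RingQuot.mkAlgHom k (tiRel k) (FreeAlgebra.ι k (TIGen.E i))

/-- The degree of a generator of `T_∞`: `deg t = 1`, `deg ∂ = -1`, `deg e_i = i`. -/
def tiDeg : TIGen → ℤ
  | TIGen.t => 1
  | TIGen.d => -1
  | TIGen.E i => i

/-- The degree-`d` homogeneous component of `T_∞`: the span of products of generators
whose degrees sum to `d`. -/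
def degComp (k : Type) [Field k] (d : ℤ) : Submodule k (TInf k) :=
  Submodule.span k
    {x : TInf k | ∃ L : List TIGen, (L.map tiDeg).sum = d ∧
      x = (L.map fun g => RingQuot.mkAlgHom k (tiRel k) (FreeAlgebra.ι k g)).prod}

/-- `c_j = Ψ_∞(e_j) = t^{j+1}∂ + Σ_i binom(j+1,i+1) t^{j-i} e_i ∈ T_∞`. -/
def cI (k : Type) [Field k] (j : ℤ) : TInf k :=
  tI k ^ (j + 1).toNat * dI k +
    ∑ i ∈ Finset.range (j + 1).toNat,
      (((j + 1).toNat.choose (i + 1) : ℤ)) • (tI k ^ (j - i).toNat * eI k i)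

/-- The commutator in `T_∞`. -/
def brI (k : Type) [Field k] (x y : TInf k) : TInf k := x * y - y * x

/-- The step operator `Ψ_S(x) = 4[c_2,[c_0,x]] + 2[c_2,x] - 3[c_1,[c_1,x]]` on `T_∞`,
built from `c_i = Ψ_∞(e_i)`. -/
def ΨS (k : Type) [Field k] (x : TInf k) : TInf k :=
  (4 : ℤ) • brI k (cI k 2) (brI k (cI k 0) x) + (2 : ℤ) • brI k (cI k 2) x
    - (3 : ℤ) • brI k (cI k 1) (brI k (cI k 1) x)

/-! Only four facts about `T_∞` enter: the Witt relations `[∂,c₁] = 2c₀`, `[∂,c₂] = 3c₁`,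
`[c₀,c₁] = c₁`, and that `ad c₀` acts by `d` on the degree-`d` component (it is a derivation
scaling each generator by its degree). For `x` with `[∂,x] = 0` the Jacobi identity then gives
`[∂,[c₂,x]] = 3[c₁,x]`, `[∂,[c₁,x]] = 2d x` and `[c₀,[c₁,x]] = (d+1)[c₁,x]`, hence
`[∂,[c₁,[c₁,x]]] = (4d+2)[c₁,x]`, and the terms of `[∂,Ψ_S(x)]` cancel:
`4·3d + 2·3 - 3(4d+2) = 0`. -/

attribute [local instance] LieRing.ofAssociativeRing

section LieRing

variable {L : Type*} [LieRing L]

theorem lie_lie_of_lie_eq_zero {m x : L} (c : L) (hx : ⁅m, x⁆ = 0) :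
    ⁅m, ⁅c, x⁆⁆ = ⁅⁅m, c⁆, x⁆ := by
  rw [leibniz_lie, hx, lie_zero, add_zero]

variable {m c₀ c₁ c₂ x : L} {d : ℤ}

theorem lie_lie_eq_three_zsmul (h₂ : ⁅m, c₂⁆ = (3 : ℤ) • c₁) (hx : ⁅m, x⁆ = 0) :
    ⁅m, ⁅c₂, x⁆⁆ = (3 : ℤ) • ⁅c₁, x⁆ := by
  rw [lie_lie_of_lie_eq_zero c₂ hx, h₂, zsmul_lie]

theorem lie_lie_lie_eq_zsmul (h₁ : ⁅m, c₁⁆ = (2 : ℤ) • c₀) (h₀₁ : ⁅c₀, c₁⁆ = c₁)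
    (hx : ⁅m, x⁆ = 0) (h₀ : ⁅c₀, x⁆ = d • x) :
    ⁅m, ⁅c₁, ⁅c₁, x⁆⁆⁆ = (4 * d + 2) • ⁅c₁, x⁆ := by
  have hm : ⁅m, ⁅c₁, x⁆⁆ = (2 * d) • x := by
    rw [lie_lie_of_lie_eq_zero c₁ hx, h₁, zsmul_lie, h₀, smul_smul]
  have h₀' : ⁅c₀, ⁅c₁, x⁆⁆ = (d + 1) • ⁅c₁, x⁆ := by
    rw [leibniz_lie, h₀₁, h₀, lie_zsmul, add_smul, one_smul, add_comm]
  rw [leibniz_lie, h₁, zsmul_lie, h₀', hm, lie_zsmul]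
  module

theorem lie_psiS_eq_zero (h₁ : ⁅m, c₁⁆ = (2 : ℤ) • c₀) (h₂ : ⁅m, c₂⁆ = (3 : ℤ) • c₁)
    (h₀₁ : ⁅c₀, c₁⁆ = c₁) (hx : ⁅m, x⁆ = 0) (h₀ : ⁅c₀, x⁆ = d • x) :
    ⁅m, (4 : ℤ) • ⁅c₂, ⁅c₀, x⁆⁆ + (2 : ℤ) • ⁅c₂, x⁆ - (3 : ℤ) • ⁅c₁, ⁅c₁, x⁆⁆⁆ = 0 := by
  have hdx : ⁅m, d • x⁆ = 0 := by rw [lie_zsmul, hx, smul_zero]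
  rw [lie_sub, lie_add, lie_zsmul, lie_zsmul, lie_zsmul, h₀, lie_lie_eq_three_zsmul h₂ hdx,
    lie_zsmul, lie_lie_eq_three_zsmul h₂ hx, lie_lie_lie_eq_zsmul h₁ h₀₁ hx h₀]
  module

end LieRing

section AssociativeRing

variable {A : Type*} [Ring A]

theorem Ring.lie_mul (a x y : A) : ⁅a, x * y⁆ = ⁅a, x⁆ * y + x * ⁅a, y⁆ := by
  simp only [Ring.lie_def, mul_sub, sub_mul, mul_assoc]
  abel

theorem Ring.mul_lie (x y a : A) : ⁅x * y, a⁆ = x * ⁅y, a⁆ + ⁅x, a⁆ * y := by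
  simp only [Ring.lie_def, mul_sub, sub_mul, mul_assoc]
  abel

theorem lie_pow_succ_of_lie_eq_one {a b : A} (h : ⁅a, b⁆ = 1) (n : ℕ) :
    ⁅a, b ^ (n + 1)⁆ = (n + 1 : ℤ) • b ^ n := by
  induction n with
  | zero => simp [h]
  | succ n ih =>
    rw [pow_succ b (n + 1), Ring.lie_mul, ih, h, mul_one, smul_mul_assoc, ← pow_succ]
    push_cast
    module

theorem lie_list_prod_of_lie_eq_zsmul {ι : Type*} (a : A) (f : ι → A) (w : ι → ℤ)
    (h : ∀ i, ⁅a, f i⁆ = w i • f i) (l : List ι) :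
    ⁅a, (l.map f).prod⁆ = (l.map w).sum • (l.map f).prod := by
  induction l with
  | nil => simp [Ring.lie_def]
  | cons i l ih =>
    rw [List.map_cons, List.prod_cons, Ring.lie_mul, ih, h, List.map_cons, List.sum_cons,
      add_smul, smul_mul_assoc, mul_smul_comm]

theorem lie_eq_zsmul_of_mem_span {R ι : Type*} [CommRing R] [Algebra R A] (a : A)
    (f : ι → A) (w : ι → ℤ) (h : ∀ i, ⁅a, f i⁆ = w i • f i) {d : ℤ} {x : A}
    (hx : x ∈ Submodule.span R {y | ∃ l : List ι, (l.map w).sum = d ∧ y = (l.map f).prod}) :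
    ⁅a, x⁆ = d • x := by
  induction hx using Submodule.span_induction with
  | mem y hy =>
    obtain ⟨l, rfl, rfl⟩ := hy
    exact lie_list_prod_of_lie_eq_zsmul a f w h l
  | zero => simp
  | add y z _ _ hy hz => rw [lie_add, hy, hz, smul_add]
  | smul r y _ hy => rw [lie_smul, hy, smul_comm]

end AssociativeRing

section TInf

variable (k : Type) [Field k]

theorem brI_eq_lie (x y : TInf k) : brI k x y = ⁅x, y⁆ := rfl

theorem lie_dI_tI : ⁅dI k, tI k⁆ = 1 := by
  rw [Ring.lie_def, sub_eq_iff_eq_add']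
  simpa only [tI, dI, map_mul, map_add, map_one] using
    RingQuot.mkAlgHom_rel k (tiRel.dt (k := k))

theorem lie_dI_eI (i : ℕ) : ⁅dI k, eI k i⁆ = 0 := by
  rw [Ring.lie_def, sub_eq_zero]
  simpa only [dI, eI, map_mul] using RingQuot.mkAlgHom_rel k (tiRel.de (k := k) i)

theorem lie_tI_eI (i : ℕ) : ⁅tI k, eI k i⁆ = 0 := by
  rw [Ring.lie_def, sub_eq_zero]
  simpa only [tI, eI, map_mul] using RingQuot.mkAlgHom_rel k (tiRel.te (k := k) i)

theorem lie_eI_eI (i j : ℕ) : ⁅eI k i, eI k j⁆ = ((j : ℤ) - i) • eI k (i + j) := by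
  rw [Ring.lie_def, sub_eq_iff_eq_add']
  simpa only [eI, map_mul, map_add, map_zsmul] using
    RingQuot.mkAlgHom_rel k (tiRel.ee (k := k) i j)

theorem cI_zero : cI k 0 = tI k * dI k + eI k 0 := by
  simp [cI]

theorem cI_one : cI k 1 = tI k ^ 2 * dI k + (2 : ℤ) • (tI k * eI k 0) + eI k 1 := by
  simp [cI, Finset.sum_range_succ]
  abel

theorem cI_two : cI k 2 =
    tI k ^ 3 * dI k + (3 : ℤ) • (tI k ^ 2 * eI k 0) + (3 : ℤ) • (tI k * eI k 1) + eI k 2 := by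
  simp [cI, Finset.sum_range_succ]
  abel

theorem lie_dI_cI_one : ⁅dI k, cI k 1⁆ = (2 : ℤ) • cI k 0 := by
  simp only [cI_one, cI_zero, lie_add, lie_zsmul, Ring.lie_mul,
    lie_pow_succ_of_lie_eq_one (lie_dI_tI k), lie_dI_tI, lie_dI_eI, lie_self, smul_mul_assoc,
    mul_zero, add_zero, one_mul, pow_one]
  module

theorem lie_dI_cI_two : ⁅dI k, cI k 2⁆ = (3 : ℤ) • cI k 1 := by
  simp only [cI_one, cI_two, lie_add, lie_zsmul, Ring.lie_mul,
    lie_pow_succ_of_lie_eq_one (lie_dI_tI k), lie_dI_tI, lie_dI_eI, lie_self, smul_mul_assoc,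
    mul_zero, add_zero, one_mul, pow_one]
  module

theorem lie_cI_zero_generator (g : TIGen) :
    ⁅cI k 0, RingQuot.mkAlgHom k (tiRel k) (FreeAlgebra.ι k g)⁆ =
      tiDeg g • RingQuot.mkAlgHom k (tiRel k) (FreeAlgebra.ι k g) := by
  have het : ⁅eI k 0, tI k⁆ = 0 := by rw [← lie_skew, lie_tI_eI, neg_zero]
  cases g with
  | t =>
    change ⁅cI k 0, tI k⁆ = (1 : ℤ) • tI k
    simp only [cI_zero, add_lie, Ring.mul_lie, lie_self, lie_dI_tI, het]
    simp
  | d =>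
    change ⁅cI k 0, dI k⁆ = (-1 : ℤ) • dI k
    have hdc : ⁅dI k, cI k 0⁆ = dI k := by
      simp only [cI_zero, lie_add, Ring.lie_mul, lie_self, lie_dI_tI, lie_dI_eI]
      simp
    rw [← lie_skew, hdc, neg_one_zsmul]
  | E i =>
    change ⁅cI k 0, eI k i⁆ = (i : ℤ) • eI k i
    simp only [cI_zero, add_lie, Ring.mul_lie, lie_tI_eI, lie_eI_eI, lie_dI_eI]
    simp

theorem lie_cI_zero_of_mem_degComp {d : ℤ} {x : TInf k} (hx : x ∈ degComp k d) :
    ⁅cI k 0, x⁆ = d • x :=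
  lie_eq_zsmul_of_mem_span (cI k 0) _ tiDeg (lie_cI_zero_generator k) hx

theorem cI_one_mem_degComp : cI k 1 ∈ degComp k 1 := by
  rw [cI_one]
  refine add_mem (add_mem ?_ (zsmul_mem ?_ 2)) ?_
  · exact Submodule.subset_span ⟨[.t, .t, .d], by simp [tiDeg], by simp [tI, dI, sq, mul_assoc]⟩
  · exact Submodule.subset_span ⟨[.t, .E 0], by simp [tiDeg], by simp [tI, eI]⟩
  · exact Submodule.subset_span ⟨[.E 1], by simp [tiDeg], by simp [eI]⟩

theorem lie_cI_zero_cI_one : ⁅cI k 0, cI k 1⁆ = cI k 1 := by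
  rw [lie_cI_zero_of_mem_degComp k (cI_one_mem_degComp k), one_smul]

end TInf

theorem psiS_preserves_L_general (k : Type) [Field k]
    (d : ℤ) (x : TInf k) (hx : x ∈ degComp k d) (hc : dI k * x = x * dI k) :
    brI k (dI k) (brI k (cI k 2) x) = (3 : ℤ) • brI k (cI k 1) x ∧
    brI k (dI k) (brI k (cI k 1) (brI k (cI k 1) x)) = (4 * d + 2) • brI k (cI k 1) x ∧
    dI k * ΨS k x = ΨS k x * dI k := by
  have h₁ := lie_dI_cI_one k
  have h₂ := lie_dI_cI_two k
  have h₀₁ := lie_cI_zero_cI_one k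
  have h₀ := lie_cI_zero_of_mem_degComp k hx
  have hx' : ⁅dI k, x⁆ = 0 := commute_iff_lie_eq.mp hc
  simp only [ΨS, brI_eq_lie]
  exact ⟨lie_lie_eq_three_zsmul h₂ hx', lie_lie_lie_eq_zsmul h₁ h₀₁ hx' h₀,
    commute_iff_lie_eq.mpr (lie_psiS_eq_zero h₁ h₂ h₀₁ hx' h₀)⟩

/-- If `x ∈ T_∞` commutes with `∂` and is homogeneous of degree `d`, then the key
identities `[∂,[c_2,x]] = 3[c_1,x]` and `[∂,[c_1,[c_1,x]]] = (4d+2)[c_1,x]` hold, and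
`Ψ_S(x)` commutes with `∂`; in particular `Ψ_S` preserves `L = {x : [∂,x] = 0}` on
homogeneous elements. -/
theorem psiS_preserves_L (k : Type) [Field k] [CharZero k]
    (d : ℤ) (x : TInf k) (hx : x ∈ degComp k d) (hc : dI k * x = x * dI k) :
    brI k (dI k) (brI k (cI k 2) x) = (3 : ℤ) • brI k (cI k 1) x ∧
    brI k (dI k) (brI k (cI k 1) (brI k (cI k 1) x)) = (4 * d + 2) • brI k (cI k 1) x ∧
    dI k * ΨS k x = ΨS k x * dI k :=
  psiS_preserves_L_general k d x hx hc
end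
end

section
/- The subalgebra of degree-zero elements of U(W_{≥-1}) (with respect to the grading deg e_i = i) is generated as a k-algebra by the three elements e_0, e_{-1}e_1, and e_{-1}^2 e_2. -/
noncomputable section

/-- The product in `U(W_{≥-1})` of the word of generators indexed by a list `L`. -/
def wordProd (k : Type) [Field k] (L : List WIdx) : UW k :=
  (L.map fun i => RingQuot.mkAlgHom k (wittRel k) (FreeAlgebra.ι k i)).prod

/-- The degree-zero component of `U(W_{≥-1})` for the grading `deg e_i = i`:
the span of the monomials `e_{m_1} ⋯ e_{m_l}` with `m_1 + ⋯ + m_l = 0`. -/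
def degZeroUW (k : Type) [Field k] : Submodule k (UW k) :=
  Submodule.span k
    {x : UW k | ∃ L : List WIdx, (L.map Subtype.val).sum = 0 ∧ x = wordProd k L}

/-!
Write `θ_p = e_{-1}^p e_p`, so that the three generators are `θ_0`, `θ_1`, `θ_2`. Moving `e_1` and
`e_{m+2}` past powers of `e_{-1}` expresses `(m+1) θ_{m+3}` as a noncommutative polynomial in
`θ_0, θ_1, θ_{m+1}, θ_{m+2}`, so in characteristic zero every `θ_p` lies in the subalgebra.

Conversely, reordering the letters of a word changes it only by words of smaller length and the
same degree. A nonempty word of degree zero has a letter `e_p` with `p ≥ 0`; the other letters sum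
to `-p`, so at least `p` of them are `e_{-1}`, and the word can be reordered into `θ_p` followed by a
shorter word of degree zero. Induction on the length finishes the proof.
-/

section

variable {k : Type} [Field k]

lemma mkAlgHom_ι_eq_eW (i : WIdx) : RingQuot.mkAlgHom k (wittRel k) (FreeAlgebra.ι k i) = eW k i.1 := by
  rw [eW, dif_pos i.2]

lemma eW_mul_eW {i j : ℤ} (hi : -1 ≤ i) (hj : -1 ≤ j) (hij : -1 ≤ i + j) :
    eW k i * eW k j = eW k j * eW k i + ((j - i : ℤ) : k) • eW k (i + j) := by
  have h := RingQuot.mkAlgHom_rel k (wittRel.rel (k := k) ⟨i, hi⟩ ⟨j, hj⟩ hij)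
  rw [map_mul, map_add, map_mul, map_zsmul] at h
  simp only [mkAlgHom_ι_eq_eW] at h
  rw [h]
  exact congrArg _ (Int.cast_smul_eq_zsmul k _ _).symm

local notation "E" => eW k (-1)

lemma eW_neg_one_mul_eW_zero : E * eW k 0 = eW k 0 * E + E := by
  simpa using eW_mul_eW (k := k) (i := -1) (j := 0) (by norm_num) (by norm_num) (by norm_num)

lemma eW_neg_one_mul_eW_one : E * eW k 1 = eW k 1 * E + (2 : k) • eW k 0 := by
  have := eW_mul_eW (k := k) (i := -1) (j := 1) (by norm_num) (by norm_num) (by norm_num)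
  norm_num at this
  exact this

lemma eW_natCast_succ_mul_eW_neg_one (n : ℕ) :
    eW k (n + 1 : ℕ) * E = E * eW k (n + 1 : ℕ) - ((n : k) + 2) • eW k n := by
  have := eW_mul_eW (k := k) (i := n + 1) (j := -1) (by omega) (by norm_num) (by omega)
  push_cast
  rw [this, show (n : ℤ) + 1 + -1 = n by ring]
  push_cast
  module

lemma eW_natCast_mul_eW_one (n : ℕ) :
    eW k n * eW k 1 = eW k 1 * eW k n + (1 - n : k) • eW k (n + 1 : ℕ) := by
  have := eW_mul_eW (k := k) (i := n) (j := 1) (by omega) (by norm_num) (by omega)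
  rw [this]
  push_cast
  rfl

lemma eW_neg_one_pow_succ_mul_eW_one (p : ℕ) :
    E ^ (p + 1) * eW k 1
      = E * eW k 1 * E ^ p + (2 * p : k) • (eW k 0 * E ^ p) + ((p : k) * (p + 1)) • E ^ p := by
  induction p with
  | zero => simp
  | succ p ih =>
    rw [pow_succ' _ (p + 1), mul_assoc, ih]
    simp only [mul_add, mul_smul_comm, ← mul_assoc, eW_neg_one_mul_eW_one, eW_neg_one_mul_eW_zero]
    simp only [add_mul, smul_mul_assoc, mul_assoc, ← pow_succ']
    push_cast
    module

variable (k) in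
def theta (p : ℕ) : UW k := eW k (-1) ^ p * eW k p

lemma eW_neg_one_pow_mul_eW_one_mul_eW (n : ℕ) :
    E ^ (n + 2) * eW k 1 * eW k (n + 1 : ℕ)
      = theta k 1 * theta k (n + 1) + (2 * ((n : k) + 1)) • (eW k 0 * theta k (n + 1))
        + (((n : k) + 1) * (n + 2)) • theta k (n + 1) := by
  simp only [theta, eW_neg_one_pow_succ_mul_eW_one, add_mul, smul_mul_assoc, mul_assoc, pow_one]
  push_cast
  module

lemma theta_mul_theta_one (m : ℕ) :
    theta k (m + 2) * theta k 1
      = E ^ (m + 3) * eW k 1 * eW k (m + 2 : ℕ) - ((m : k) + 1) • theta k (m + 3)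
        - ((m : k) + 3) • (E ^ (m + 2) * eW k 1 * eW k (m + 1 : ℕ))
        + (((m : k) + 3) * m) • theta k (m + 2) := by
  have h1 := eW_natCast_succ_mul_eW_neg_one (k := k) (m + 1)
  have h2 := eW_natCast_mul_eW_one (k := k) (m + 2)
  have h3 := eW_natCast_mul_eW_one (k := k) (m + 1)
  simp only [show m + 1 + 1 = m + 2 from rfl, show m + 2 + 1 = m + 3 from rfl] at h1 h2 h3
  calc theta k (m + 2) * theta k 1 = E ^ (m + 2) * (eW k (m + 2 : ℕ) * E) * eW k 1 := by
        simp only [theta, pow_one, mul_assoc, Nat.cast_one]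
    _ = E ^ (m + 3) * (eW k (m + 2 : ℕ) * eW k 1)
          - ((m : k) + 3) • (E ^ (m + 2) * (eW k (m + 1 : ℕ) * eW k 1)) := by
        rw [h1]
        simp only [mul_sub, sub_mul, mul_smul_comm, smul_mul_assoc, mul_assoc, pow_succ]
        push_cast
        module
    _ = _ := by
        rw [h2, h3]
        simp only [theta, mul_add, mul_smul_comm, ← mul_assoc]
        push_cast
        module

lemma theta_recursion (m : ℕ) :
    ((m : k) + 1) • theta k (m + 3)
      = theta k 1 * theta k (m + 2) - theta k (m + 2) * theta k 1
        + (2 * ((m : k) + 2)) • (eW k 0 * theta k (m + 2))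
        + (2 * ((m : k) + 1) * (m + 3)) • theta k (m + 2)
        - ((m : k) + 3) • (theta k 1 * theta k (m + 1))
        - (2 * ((m : k) + 1) * (m + 3)) • (eW k 0 * theta k (m + 1))
        - (((m : k) + 1) * (m + 2) * (m + 3)) • theta k (m + 1) := by
  have hA := eW_neg_one_pow_mul_eW_one_mul_eW (k := k) (m + 1)
  have hB := eW_neg_one_pow_mul_eW_one_mul_eW (k := k) m
  simp only [show m + 1 + 1 = m + 2 from rfl, show m + 1 + 2 = m + 3 from rfl] at hA hB
  rw [theta_mul_theta_one, hA, hB]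
  push_cast
  module

theorem theta_mem [CharZero k] {S : Subalgebra k (UW k)} (h₀ : theta k 0 ∈ S)
    (h₁ : theta k 1 ∈ S) (h₂ : theta k 2 ∈ S) : ∀ p, theta k p ∈ S
  | 0 => h₀
  | 1 => h₁
  | 2 => h₂
  | m + 3 => by
    have ih₁ := theta_mem h₀ h₁ h₂ (m + 1)
    have ih₂ := theta_mem h₀ h₁ h₂ (m + 2)
    have he₀ : eW k 0 ∈ S := by simpa [theta] using h₀
    have h : ((m : k) + 1) • theta k (m + 3) ∈ S := by
      rw [theta_recursion]
      refine sub_mem (sub_mem (sub_mem (add_mem (add_mem (sub_mem ?_ ?_) ?_) ?_) ?_) ?_) ?_ <;>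
        first
        | exact Subalgebra.smul_mem _ (mul_mem he₀ ‹_›) _
        | exact Subalgebra.smul_mem _ (mul_mem h₁ ‹_›) _
        | exact Subalgebra.smul_mem _ ‹_› _
        | exact mul_mem ‹_› ‹_›
    exact (Submodule.smul_mem_iff (Subalgebra.toSubmodule S) (Nat.cast_add_one_ne_zero m)).mp h

lemma wordProd_cons (i : WIdx) (L : List WIdx) :
    wordProd k (i :: L) = eW k i * wordProd k L := by
  rw [wordProd, List.map_cons, List.prod_cons, mkAlgHom_ι_eq_eW, wordProd]

lemma wordProd_append (L M : List WIdx) :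
    wordProd k (L ++ M) = wordProd k L * wordProd k M := by
  simp [wordProd]

lemma wordProd_replicate (p : ℕ) (i : WIdx) :
    wordProd k (List.replicate p i) = eW k i ^ p := by
  simp [wordProd, mkAlgHom_ι_eq_eW]

def thetaWord (p : ℕ) : List WIdx := List.replicate p ⟨-1, le_rfl⟩ ++ [⟨p, by omega⟩]

lemma wordProd_thetaWord (p : ℕ) : wordProd k (thetaWord p) = theta k p := by
  simp [thetaWord, theta, wordProd, mkAlgHom_ι_eq_eW]

lemma sum_thetaWord (p : ℕ) : ((thetaWord p).map Subtype.val).sum = 0 := by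
  simp [thetaWord]

lemma neg_count_neg_one_le_sum (L : List WIdx) :
    -(L.count ⟨-1, le_rfl⟩ : ℤ) ≤ (L.map Subtype.val).sum := by
  induction L with
  | nil => simp
  | cons x L ih =>
    rcases eq_or_ne x ⟨-1, le_rfl⟩ with rfl | hx
    · simp only [List.count_cons_self, List.map_cons, List.sum_cons]
      omega
    · have : x.1 ≠ -1 := fun h => hx (Subtype.ext h)
      simp only [List.count_cons, beq_iff_eq, hx, if_false, List.map_cons, List.sum_cons]
      have := x.2
      omega

lemma exists_perm_thetaWord_append {L : List WIdx} (hL : L ≠ [])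
    (hsum : (L.map Subtype.val).sum = 0) : ∃ p L₁, L.Perm (thetaWord p ++ L₁) := by
  obtain ⟨y, hy, hy0⟩ : ∃ y ∈ L, 0 ≤ y.1 := by
    by_contra! h
    have hall : ∀ z ∈ L.map Subtype.val, z = -1 := by
      simp only [List.mem_map]
      rintro _ ⟨z, hz, rfl⟩
      have := z.2
      have := h z hz
      omega
    rw [List.eq_replicate_of_mem hall, List.sum_replicate] at hsum
    simp_all
  lift y.1 to ℕ using hy0 with p hp
  have hrest : ((L.erase y).map Subtype.val).sum = -p := by
    have := ((List.perm_cons_erase hy).map Subtype.val).sum_eq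
    simp only [List.map_cons, List.sum_cons, hsum] at this
    omega
  have hcount : p ≤ (L.erase y).count ⟨-1, le_rfl⟩ := by
    have := neg_count_neg_one_le_sum (L.erase y)
    omega
  obtain ⟨L₁, hL₁⟩ := (List.replicate_sublist_iff.mpr hcount).exists_perm_append
  have hyp : y = ⟨p, by omega⟩ := Subtype.ext hp.symm
  refine ⟨p, L₁, (List.perm_cons_erase hy).trans ?_⟩
  rw [thetaWord, List.append_assoc, List.singleton_append, ← hyp]
  exact (hL₁.cons y).trans List.perm_middle.symm

variable (k) in
def wordSpan (n : ℕ) (s : ℤ) : Submodule k (UW k) :=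
  Submodule.span k
    {x | ∃ L : List WIdx, L.length < n ∧ (L.map Subtype.val).sum = s ∧ x = wordProd k L}

lemma wordProd_mem_wordSpan {L : List WIdx} {n : ℕ} (hn : L.length < n) :
    wordProd k L ∈ wordSpan k n (L.map Subtype.val).sum :=
  Submodule.subset_span ⟨L, hn, rfl, rfl⟩

lemma eW_mul_mem_wordSpan (i : WIdx) {n : ℕ} {s : ℤ} {x : UW k} (hx : x ∈ wordSpan k n s) :
    eW k i * x ∈ wordSpan k (n + 1) (i + s) := by
  induction hx using Submodule.span_induction with
  | mem x hx =>
    obtain ⟨L, hn, rfl, rfl⟩ := hx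
    rw [← wordProd_cons]
    simpa only [List.map_cons, List.sum_cons] using
      wordProd_mem_wordSpan (k := k) (L := i :: L) (Nat.succ_lt_succ hn)
  | zero => simp
  | add x y _ _ hx hy => rw [mul_add]; exact add_mem hx hy
  | smul a x _ hx => rw [mul_smul_comm]; exact Submodule.smul_mem _ _ hx

lemma wordProd_swap_sub_mem_wordSpan (x y : WIdx) (L : List WIdx) :
    wordProd k (y :: x :: L) - wordProd k (x :: y :: L)
      ∈ wordSpan k (y :: x :: L).length ((y :: x :: L).map Subtype.val).sum := by
  rcases eq_or_ne x y with rfl | hxy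
  · simp
  have hxy : -1 ≤ y.1 + x.1 := by
    have := x.2; have := y.2
    have : x.1 ≠ y.1 := fun h => hxy (Subtype.ext h)
    omega
  simp only [wordProd_cons, ← mul_assoc, eW_mul_eW y.2 x.2 hxy, add_mul, add_sub_cancel_left,
    smul_mul_assoc]
  refine Submodule.smul_mem _ _ ?_
  have := wordProd_mem_wordSpan (k := k) (L := ⟨y.1 + x.1, hxy⟩ :: L) (n := L.length + 2)
    (by simp)
  simpa only [wordProd_cons, List.map_cons, List.sum_cons, List.length_cons, add_assoc]
    using this

lemma wordProd_sub_mem_wordSpan_of_perm {L L' : List WIdx} (h : L.Perm L') :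
    wordProd k L - wordProd k L' ∈ wordSpan k L.length (L.map Subtype.val).sum := by
  induction h with
  | nil => simp
  | cons x _ ih =>
    simpa [wordProd_cons, mul_sub] using eW_mul_mem_wordSpan (k := k) x ih
  | swap x y L => exact wordProd_swap_sub_mem_wordSpan (k := k) x y L
  | trans h₁₂ _ ih₁₂ ih₂₃ =>
    rw [h₁₂.length_eq, (h₁₂.map Subtype.val).sum_eq] at *
    simpa using add_mem ih₁₂ ih₂₃

theorem wordProd_mem_of_theta_mem {S : Subalgebra k (UW k)} (hS : ∀ p, theta k p ∈ S)
    (L : List WIdx) (hL : (L.map Subtype.val).sum = 0) : wordProd k L ∈ S := by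
  induction hn : L.length using Nat.strong_induction_on generalizing L with
  | _ n ih =>
    rcases eq_or_ne L [] with rfl | hne
    · exact one_mem S
    obtain ⟨p, L₁, hperm⟩ := exists_perm_thetaWord_append hne hL
    have hshort : wordSpan k n 0 ≤ Subalgebra.toSubmodule S := by
      refine Submodule.span_le.mpr ?_
      rintro _ ⟨M, hM, hM0, rfl⟩
      exact ih _ hM M hM0 rfl
    have hL₁ : (L₁.map Subtype.val).sum = 0 := by
      simpa only [List.map_append, List.sum_append, hL, sum_thetaWord, zero_add, eq_comm] using
        (hperm.map Subtype.val).sum_eq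
    have hlen : L₁.length < n := by
      have := hperm.length_eq
      simp [thetaWord] at this
      omega
    have hdiff := wordProd_sub_mem_wordSpan_of_perm (k := k) hperm
    rw [hn, hL, wordProd_append, wordProd_thetaWord] at hdiff
    rw [← sub_add_cancel (wordProd k L) (theta k p * wordProd k L₁)]
    exact add_mem (hshort hdiff) (mul_mem (hS p) (ih _ hlen L₁ hL₁ rfl))

lemma mul_mem_degZeroUW (x y : UW k) (hx : x ∈ degZeroUW k) (hy : y ∈ degZeroUW k) :
    x * y ∈ degZeroUW k := by
  have : degZeroUW k * degZeroUW k ≤ degZeroUW k := by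
    rw [degZeroUW, Submodule.span_mul_span]
    refine Submodule.span_le.mpr ?_
    rintro _ ⟨_, ⟨L, hL, rfl⟩, _, ⟨M, hM, rfl⟩, rfl⟩
    refine Submodule.subset_span ⟨L ++ M, ?_, (wordProd_append L M).symm⟩
    simp only [List.map_append, List.sum_append, hL, hM, add_zero]
  exact this (Submodule.mul_mem_mul hx hy)

lemma one_mem_degZeroUW : (1 : UW k) ∈ degZeroUW k :=
  Submodule.subset_span ⟨[], rfl, rfl⟩

lemma theta_mem_degZeroUW (p : ℕ) : theta k p ∈ degZeroUW k :=
  Submodule.subset_span ⟨thetaWord p, sum_thetaWord p, (wordProd_thetaWord p).symm⟩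

end

/-- The degree-zero subalgebra of `U(W_{≥-1})` is generated as a `k`-algebra by
`e_0`, `e_{-1} e_1` and `e_{-1}² e_2`. -/
theorem degree_zero_finitely_generated (k : Type) [Field k] [CharZero k] :
    Subalgebra.toSubmodule
        (Algebra.adjoin k {eW k 0, eW k (-1) * eW k 1, (eW k (-1)) ^ 2 * eW k 2})
      = degZeroUW k := by
  have hgen : {eW k 0, eW k (-1) * eW k 1, (eW k (-1)) ^ 2 * eW k 2} = theta k '' {0, 1, 2} := by
    simp [Set.image_insert_eq, theta]
  rw [hgen]
  apply le_antisymm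
  · exact Algebra.adjoin_le (S := (degZeroUW k).toSubalgebra one_mem_degZeroUW mul_mem_degZeroUW)
      (by rintro _ ⟨p, -, rfl⟩; exact theta_mem_degZeroUW p)
  · refine Submodule.span_le.mpr ?_
    rintro _ ⟨L, hL, rfl⟩
    refine wordProd_mem_of_theta_mem (theta_mem ?_ ?_ ?_) L hL <;>
      exact Algebra.subset_adjoin (Set.mem_image_of_mem _ (by simp))
end
end
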